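/- Let p, q, V, W : ℝ² → ℝ be smooth and let ψ : ℝ² → ℂ⁴ be a smooth solution of the Lie–Wilczynski system. Then the determinant of the 4×4 complex matrix whose columns are ψ, ∂₁ψ, ∂₂ψ, ∂₁∂₂ψ is constant on ℝ²: its partial derivatives ∂₁ and ∂₂ both vanish identically. -/

import Mathlib

open Complex ComplexConjugate

noncomputable section

/-- Partial derivative in the first variable of a two-variable function. -/
def pd1 {E : Type*} [NormedAddCommGroup E] [NormedSpace ℝ E]
    (f : ℝ → ℝ → E) (x y : ℝ) : E := deriv (fun t => f t y) x

/-- Partial derivative in the second variable of a two-variable function. -/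
def pd2 {E : Type*} [NormedAddCommGroup E] [NormedSpace ℝ E]
    (f : ℝ → ℝ → E) (x y : ℝ) : E := deriv (fun t => f x t) y

/-- The pseudo-Hermitian form of signature (2,2) on ℂ⁴:
`⟨a,b⟩ = −a₀·conj(b₃) + a₁·conj(b₂) + a₂·conj(b₁) − a₃·conj(b₀)`. -/
def herm4 (a b : Fin 4 → ℂ) : ℂ :=
  -(a 0 * conj (b 3)) + a 1 * conj (b 2) + a 2 * conj (b 1) - a 3 * conj (b 0)

/-- The wedge product of two vectors of ℂ⁴, as a vector in ℂ⁶, in the explicit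
coordinates `y₀ = (p₀₂ − p₃₁)/2, y₁ = (p₀₂ + p₃₁)/2, y₂ = (p₀₃ + p₁₂)/2,
y₃ = (p₀₃ − p₁₂)/(2i), y₄ = (p₀₁ − p₂₃)/(2i), y₅ = (p₀₁ + p₂₃)/(2i)`,
where `p_{ij} = aᵢbⱼ − aⱼbᵢ`. -/
def wedgeC (a b : Fin 4 → ℂ) : Fin 6 → ℂ :=
  ![((a 0 * b 2 - a 2 * b 0) - (a 3 * b 1 - a 1 * b 3)) / 2,
    ((a 0 * b 2 - a 2 * b 0) + (a 3 * b 1 - a 1 * b 3)) / 2,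
    ((a 0 * b 3 - a 3 * b 0) + (a 1 * b 2 - a 2 * b 1)) / 2,
    ((a 0 * b 3 - a 3 * b 0) - (a 1 * b 2 - a 2 * b 1)) / (2 * Complex.I),
    ((a 0 * b 1 - a 1 * b 0) - (a 2 * b 3 - a 3 * b 2)) / (2 * Complex.I),
    ((a 0 * b 1 - a 1 * b 0) + (a 2 * b 3 - a 3 * b 2)) / (2 * Complex.I)]

/-- The real bilinear form of signature (4,2) on ℝ⁶ (the Lie quadric form). -/
def Q6 (x y : Fin 6 → ℝ) : ℝ :=
  -(x 0 * y 0) + x 1 * y 1 + x 2 * y 2 + x 3 * y 3 + x 4 * y 4 - x 5 * y 5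

/-- The pseudo-Hermitian form of signature (4,2) on ℂ⁶. -/
def herm6 (x y : Fin 6 → ℂ) : ℂ :=
  -(x 0 * conj (y 0)) + x 1 * conj (y 1) + x 2 * conj (y 2) + x 3 * conj (y 3)
    + x 4 * conj (y 4) - x 5 * conj (y 5)

/-- The complex bilinear form on ℂ⁶. -/
def bil6 (x y : Fin 6 → ℂ) : ℂ :=
  -(x 0 * y 0) + x 1 * y 1 + x 2 * y 2 + x 3 * y 3 + x 4 * y 4 - x 5 * y 5

/-- The Euclidean dot product on ℝ³. -/
def dot3 (u v : Fin 3 → ℝ) : ℝ := u 0 * v 0 + u 1 * v 1 + u 2 * v 2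

/-- The Schwarzian derivative `S(h) = h‴/h′ − (3/2)(h″/h′)²`. -/
def schwarzian (h : ℝ → ℝ) (x : ℝ) : ℝ :=
  deriv (deriv (deriv h)) x / deriv h x - (3/2) * (deriv (deriv h) x / deriv h x) ^ 2

/-- `(∂₁ + c)² u`, an abbreviation for `∂₁(∂₁u + c·u) + c·(∂₁u + c·u)`. -/
def msq1 (c u : ℝ → ℝ → ℂ) : ℝ → ℝ → ℂ := fun x y =>
  pd1 (fun x' y' => pd1 u x' y' + c x' y' * u x' y') x y
    + c x y * (pd1 u x y + c x y * u x y)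

/-- `(∂₂ + c)² u`, an abbreviation for `∂₂(∂₂u + c·u) + c·(∂₂u + c·u)`. -/
def msq2 (c u : ℝ → ℝ → ℂ) : ℝ → ℝ → ℂ := fun x y =>
  pd2 (fun x' y' => pd2 u x' y' + c x' y' * u x' y') x y
    + c x y * (pd2 u x y + c x y * u x y)

/-- The real part map `U = −2·Im(ψ ∧ ∂₁ψ)` used to define the first curvature sphere. -/
def Uvec (ψ : ℝ → ℝ → Fin 4 → ℂ) : ℝ → ℝ → Fin 6 → ℝ :=
  fun x y i => -2 * (wedgeC (ψ x y) (pd1 ψ x y) i).im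

/-- The real part map `S = 2·Re(ψ ∧ ∂₂ψ)` used to define the second curvature sphere. -/
def Svec (ψ : ℝ → ℝ → Fin 4 → ℂ) : ℝ → ℝ → Fin 6 → ℝ :=
  fun x y i => 2 * (wedgeC (ψ x y) (pd2 ψ x y) i).re

section Aux

variable {E : Type*} [NormedAddCommGroup E] [NormedSpace ℝ E]

theorem hdd1 {f : ℝ → ℝ → E} (hf : ContDiff ℝ (⊤ : ℕ∞) (fun z : ℝ × ℝ => f z.1 z.2))
    (x y : ℝ) : HasDerivAt (fun t => f t y) (pd1 f x y) x := by
  have h : DifferentiableAt ℝ (fun t : ℝ => f t y) x := by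
    have : (fun t : ℝ => f t y) = (fun z : ℝ × ℝ => f z.1 z.2) ∘ (fun t : ℝ => (t, y)) := rfl
    rw [this]
    exact DifferentiableAt.comp x ((hf.differentiable (by simp)) (x, y))
      ((differentiable_id.prodMk (differentiable_const y)) x)
  exact h.hasDerivAt

theorem hdd2 {f : ℝ → ℝ → E} (hf : ContDiff ℝ (⊤ : ℕ∞) (fun z : ℝ × ℝ => f z.1 z.2))
    (x y : ℝ) : HasDerivAt (fun t => f x t) (pd2 f x y) y := by
  have h : DifferentiableAt ℝ (fun t : ℝ => f x t) y := by
    have : (fun t : ℝ => f x t) = (fun z : ℝ × ℝ => f z.1 z.2) ∘ (fun t : ℝ => (x, t)) := rfl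
    rw [this]
    exact DifferentiableAt.comp y ((hf.differentiable (by simp)) (x, y))
      ((differentiable_const x).prodMk differentiable_id y)
  exact h.hasDerivAt

theorem pd1_eq_fderiv {f : ℝ → ℝ → E} (hf : ContDiff ℝ (⊤ : ℕ∞) (fun z : ℝ × ℝ => f z.1 z.2))
    (x y : ℝ) :
    pd1 f x y = fderiv ℝ (fun z : ℝ × ℝ => f z.1 z.2) (x, y) (1, 0) := by
  have hc : HasDerivAt (fun t : ℝ => ((t, y) : ℝ × ℝ)) ((1 : ℝ), (0 : ℝ)) x :=
    (hasDerivAt_id x).prodMk (hasDerivAt_const x y)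
  have h := ((hf.differentiable (by simp)) (x, y)).hasFDerivAt.comp_hasDerivAt x hc
  exact ((hdd1 hf x y).unique h)

theorem pd2_eq_fderiv {f : ℝ → ℝ → E} (hf : ContDiff ℝ (⊤ : ℕ∞) (fun z : ℝ × ℝ => f z.1 z.2))
    (x y : ℝ) :
    pd2 f x y = fderiv ℝ (fun z : ℝ × ℝ => f z.1 z.2) (x, y) (0, 1) := by
  have hc : HasDerivAt (fun t : ℝ => ((x, t) : ℝ × ℝ)) ((0 : ℝ), (1 : ℝ)) y :=
    (hasDerivAt_const y x).prodMk (hasDerivAt_id y)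
  have h := ((hf.differentiable (by simp)) (x, y)).hasFDerivAt.comp_hasDerivAt y hc
  exact ((hdd2 hf x y).unique h)

theorem contDiff_pd1 {f : ℝ → ℝ → E} (hf : ContDiff ℝ (⊤ : ℕ∞) (fun z : ℝ × ℝ => f z.1 z.2)) :
    ContDiff ℝ (⊤ : ℕ∞) (fun z : ℝ × ℝ => pd1 f z.1 z.2) := by
  have : (fun z : ℝ × ℝ => pd1 f z.1 z.2)
      = fun z : ℝ × ℝ => (fderiv ℝ (fun w : ℝ × ℝ => f w.1 w.2) z) (1, 0) := by
    funext z
    exact pd1_eq_fderiv hf z.1 z.2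
  rw [this]
  exact (ContinuousLinearMap.apply ℝ E ((1 : ℝ), (0 : ℝ))).contDiff.comp
    (hf.fderiv_right (by simp))

theorem contDiff_pd2 {f : ℝ → ℝ → E} (hf : ContDiff ℝ (⊤ : ℕ∞) (fun z : ℝ × ℝ => f z.1 z.2)) :
    ContDiff ℝ (⊤ : ℕ∞) (fun z : ℝ × ℝ => pd2 f z.1 z.2) := by
  have : (fun z : ℝ × ℝ => pd2 f z.1 z.2)
      = fun z : ℝ × ℝ => (fderiv ℝ (fun w : ℝ × ℝ => f w.1 w.2) z) (0, 1) := by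
    funext z
    exact pd2_eq_fderiv hf z.1 z.2
  rw [this]
  exact (ContinuousLinearMap.apply ℝ E ((0 : ℝ), (1 : ℝ))).contDiff.comp
    (hf.fderiv_right (by simp))

theorem pd_symm {f : ℝ → ℝ → E} (hf : ContDiff ℝ (⊤ : ℕ∞) (fun z : ℝ × ℝ => f z.1 z.2))
    (x y : ℝ) : pd1 (pd2 f) x y = pd2 (pd1 f) x y := by
  set F : ℝ × ℝ → E := fun z => f z.1 z.2 with hF
  set G : ℝ × ℝ → (ℝ × ℝ →L[ℝ] E) := fderiv ℝ F with hG
  have hGs : ContDiff ℝ (⊤ : ℕ∞) G := hf.fderiv_right (by simp)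
  have hGd := hGs.differentiable (by simp)
  -- pd1 (pd2 f) x y
  have e2 : ∀ t, pd2 f t y = (G (t, y)) (0, 1) := fun t => pd2_eq_fderiv hf t y
  have e1 : ∀ s, pd1 f x s = (G (x, s)) (1, 0) := fun s => pd1_eq_fderiv hf x s
  have hc1 : HasDerivAt (fun t : ℝ => ((t, y) : ℝ × ℝ)) ((1 : ℝ), (0 : ℝ)) x :=
    (hasDerivAt_id x).prodMk (hasDerivAt_const x y)
  have hc2 : HasDerivAt (fun s : ℝ => ((x, s) : ℝ × ℝ)) ((0 : ℝ), (1 : ℝ)) y :=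
    (hasDerivAt_const y x).prodMk (hasDerivAt_id y)
  have hG1 : HasDerivAt (fun t : ℝ => G (t, y)) (fderiv ℝ G (x, y) (1, 0)) x :=
    (hGd (x, y)).hasFDerivAt.comp_hasDerivAt x hc1
  have hG2 : HasDerivAt (fun s : ℝ => G (x, s)) (fderiv ℝ G (x, y) (0, 1)) y :=
    (hGd (x, y)).hasFDerivAt.comp_hasDerivAt y hc2
  have h1 : HasDerivAt (fun t : ℝ => (G (t, y)) (0, 1))
      ((fderiv ℝ G (x, y) (1, 0)) (0, 1)) x := by
    have := (ContinuousLinearMap.apply ℝ E ((0:ℝ), (1:ℝ))).hasFDerivAt.comp_hasDerivAt x hG1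
    exact this
  have h2 : HasDerivAt (fun s : ℝ => (G (x, s)) (1, 0))
      ((fderiv ℝ G (x, y) (0, 1)) (1, 0)) y := by
    have := (ContinuousLinearMap.apply ℝ E ((1:ℝ), (0:ℝ))).hasFDerivAt.comp_hasDerivAt y hG2
    exact this
  have key : (fderiv ℝ G (x, y)) (1, 0) (0, 1) = (fderiv ℝ G (x, y)) (0, 1) (1, 0) :=
    second_derivative_symmetric (fun z => ((hf.differentiable (by simp)) z).hasFDerivAt)
      ((hGd (x, y)).hasFDerivAt) _ _
  have l1 : pd1 (pd2 f) x y = (fderiv ℝ G (x, y) (1, 0)) (0, 1) := by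
    have : (fun t : ℝ => pd2 f t y) = fun t : ℝ => (G (t, y)) (0, 1) := funext e2
    rw [pd1, this]
    exact h1.deriv
  have l2 : pd2 (pd1 f) x y = (fderiv ℝ G (x, y) (0, 1)) (1, 0) := by
    have : (fun s : ℝ => pd1 f x s) = fun s : ℝ => (G (x, s)) (1, 0) := funext e1
    rw [pd2, this]
    exact h2.deriv
  rw [l1, l2, key]

end Aux

section Det

open scoped BigOperators

/-- The determinant of rows, as a continuous multilinear map over ℝ. -/
def detCM : ContinuousMultilinearMap ℝ (fun _ : Fin 4 => (Fin 4 → ℂ)) ℂ :=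
  ∑ σ : Equiv.Perm (Fin 4),
    (Equiv.Perm.sign σ : ℤ) •
      (ContinuousMultilinearMap.mkPiAlgebra ℝ (Fin 4) ℂ).compContinuousLinearMap
        (fun i => ContinuousLinearMap.proj (σ i))

theorem detCM_apply (m : Fin 4 → Fin 4 → ℂ) :
    detCM m = Matrix.det (Matrix.of m) := by
  rw [← Matrix.det_transpose, Matrix.det_apply]
  simp [detCM, Matrix.det_apply, Units.smul_def, zsmul_eq_mul]

theorem hasDerivAt_det {r : Fin 4 → ℝ → (Fin 4 → ℂ)} {r' : Fin 4 → (Fin 4 → ℂ)} {x : ℝ}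
    (h : ∀ i, HasDerivAt (r i) (r' i) x) :
    HasDerivAt (fun t => Matrix.det (Matrix.of (fun i => r i t)))
      (∑ i, Matrix.det (Matrix.of (Function.update (fun j => r j x) i (r' i)))) x := by
  have hg : HasDerivAt (fun t => (fun i => r i t)) (fun i => r' i) x := hasDerivAt_pi.2 h
  have hF := (detCM.hasFDerivAt (fun i => r i x)).comp_hasDerivAt x hg
  have : (fun t => Matrix.det (Matrix.of (fun i => r i t)))
      = fun t => detCM (fun i => r i t) := by
    funext t; rw [detCM_apply]
  rw [this]
  refine hF.congr_deriv ?_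
  rw [ContinuousMultilinearMap.linearDeriv_apply]
  exact Finset.sum_congr rfl fun i _ => (detCM_apply _)

end Det

section Det4

theorem upd_vec4_0 {α : Type*} (a b c d v : α) :
    Function.update ![a, b, c, d] (0 : Fin 4) v = ![v, b, c, d] := by
  funext i; fin_cases i <;> simp [Function.update]

theorem upd_vec4_1 {α : Type*} (a b c d v : α) :
    Function.update ![a, b, c, d] (1 : Fin 4) v = ![a, v, c, d] := by
  funext i; fin_cases i <;> simp [Function.update]

theorem upd_vec4_2 {α : Type*} (a b c d v : α) :
    Function.update ![a, b, c, d] (2 : Fin 4) v = ![a, b, v, d] := by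
  funext i; fin_cases i <;> simp [Function.update]

theorem upd_vec4_3 {α : Type*} (a b c d v : α) :
    Function.update ![a, b, c, d] (3 : Fin 4) v = ![a, b, c, v] := by
  funext i; fin_cases i <;> simp [Function.update]

theorem hasDerivAt_det4 {a b c d : ℝ → Fin 4 → ℂ} {a' b' c' d' : Fin 4 → ℂ} {x : ℝ}
    (ha : HasDerivAt a a' x) (hb : HasDerivAt b b' x)
    (hc : HasDerivAt c c' x) (hd : HasDerivAt d d' x) :
    HasDerivAt (fun t => Matrix.det (Matrix.of ![a t, b t, c t, d t]))
      (Matrix.det (Matrix.of ![a', b x, c x, d x])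
        + Matrix.det (Matrix.of ![a x, b', c x, d x])
        + Matrix.det (Matrix.of ![a x, b x, c', d x])
        + Matrix.det (Matrix.of ![a x, b x, c x, d'])) x := by
  have hrows : ∀ i : Fin 4,
      HasDerivAt ((![a, b, c, d] : Fin 4 → ℝ → Fin 4 → ℂ) i)
        ((![a', b', c', d'] : Fin 4 → Fin 4 → ℂ) i) x := by
    intro i; fin_cases i
    exacts [ha, hb, hc, hd]
  have h := hasDerivAt_det hrows
  have hfun : ∀ t, (fun i => (![a, b, c, d] : Fin 4 → ℝ → Fin 4 → ℂ) i t)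
      = ![a t, b t, c t, d t] := by
    intro t; funext i; fin_cases i <;> rfl
  simp only [hfun] at h
  rw [Fin.sum_univ_four] at h
  simp only [Matrix.cons_val_zero, Matrix.cons_val_one, Matrix.head_cons,
    Matrix.cons_val_two, Matrix.tail_cons, Matrix.cons_val_three,
    upd_vec4_0, upd_vec4_1, upd_vec4_2, upd_vec4_3] at h
  exact h

end Det4


set_option maxHeartbeats 1000000 in
theorem det_fin_four (M : Matrix (Fin 4) (Fin 4) ℂ) :
    M.det =
      M 0 0 * (M 1 1*(M 2 2*M 3 3 - M 2 3*M 3 2) - M 1 2*(M 2 1*M 3 3 - M 2 3*M 3 1)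
          + M 1 3*(M 2 1*M 3 2 - M 2 2*M 3 1))
      - M 0 1 * (M 1 0*(M 2 2*M 3 3 - M 2 3*M 3 2) - M 1 2*(M 2 0*M 3 3 - M 2 3*M 3 0)
          + M 1 3*(M 2 0*M 3 2 - M 2 2*M 3 0))
      + M 0 2 * (M 1 0*(M 2 1*M 3 3 - M 2 3*M 3 1) - M 1 1*(M 2 0*M 3 3 - M 2 3*M 3 0)
          + M 1 3*(M 2 0*M 3 1 - M 2 1*M 3 0))
      - M 0 3 * (M 1 0*(M 2 1*M 3 2 - M 2 2*M 3 1) - M 1 1*(M 2 0*M 3 2 - M 2 2*M 3 0)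
          + M 1 2*(M 2 0*M 3 1 - M 2 1*M 3 0)) := by
  rw [Matrix.det_succ_row_zero, Fin.sum_univ_four]
  simp [Matrix.det_fin_three, Matrix.submatrix_apply, Fin.succAbove, Fin.lt_def,
    show (Fin.succ 2 : Fin 4) = 3 from rfl, show (Fin.castSucc 2 : Fin 4) = 2 from rfl,
    show ((3 : Fin 4) : ℕ) = 3 from rfl, show ((2 : Fin 3) : ℕ) = 2 from rfl,
    show ((1 : Fin 3) : ℕ) = 1 from rfl, show ((0 : Fin 3) : ℕ) = 0 from rfl]
  ring


set_option maxHeartbeats 2000000 in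
/-- the determinant of the 4×4 matrix with columns
`ψ, ∂₁ψ, ∂₂ψ, ∂₁∂₂ψ` is constant for any smooth solution of the
Lie–Wilczynski system. -/
theorem statement_5
    (p q V W : ℝ → ℝ → ℝ) (ψ : ℝ → ℝ → Fin 4 → ℂ)
    (hp : ContDiff ℝ (⊤ : ℕ∞) (fun z : ℝ × ℝ => p z.1 z.2))
    (hq : ContDiff ℝ (⊤ : ℕ∞) (fun z : ℝ × ℝ => q z.1 z.2))
    (hV : ContDiff ℝ (⊤ : ℕ∞) (fun z : ℝ × ℝ => V z.1 z.2))
    (hW : ContDiff ℝ (⊤ : ℕ∞) (fun z : ℝ × ℝ => W z.1 z.2))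
    (hψ : ContDiff ℝ (⊤ : ℕ∞) (fun z : ℝ × ℝ => ψ z.1 z.2))
    (hLW1 : ∀ x y, pd1 (pd1 ψ) x y
        = (-(Complex.I * (p x y : ℂ))) • pd2 ψ x y
          + (((V x y : ℂ) + Complex.I * ((pd2 p x y : ℝ) : ℂ)) / 2) • ψ x y)
    (hLW2 : ∀ x y, pd2 (pd2 ψ) x y
        = (Complex.I * (q x y : ℂ)) • pd1 ψ x y
          + (((W x y : ℂ) - Complex.I * ((pd1 q x y : ℝ) : ℂ)) / 2) • ψ x y)
    (D : ℝ → ℝ → ℂ)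
    (hD : ∀ x y, D x y
        = Matrix.det (Matrix.transpose (Matrix.of ![ψ x y, pd1 ψ x y, pd2 ψ x y, pd1 (pd2 ψ) x y]))) :
    ∀ x y, pd1 D x y = 0 ∧ pd2 D x y = 0 := by
  intro x y
  have hψ1 : ContDiff ℝ (⊤ : ℕ∞) (fun z : ℝ × ℝ => pd1 ψ z.1 z.2) := contDiff_pd1 hψ
  have hψ2 : ContDiff ℝ (⊤ : ℕ∞) (fun z : ℝ × ℝ => pd2 ψ z.1 z.2) := contDiff_pd2 hψ
  have hψ12 : ContDiff ℝ (⊤ : ℕ∞) (fun z : ℝ × ℝ => pd1 (pd2 ψ) z.1 z.2) := contDiff_pd1 hψ2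
  constructor
  · -- ∂₁ D = 0
    have hdet := hasDerivAt_det4 (hdd1 hψ x y) (hdd1 hψ1 x y) (hdd1 hψ2 x y) (hdd1 hψ12 x y)
    have hfun : (fun t => D t y)
        = fun t => Matrix.det (Matrix.of ![ψ t y, pd1 ψ t y, pd2 ψ t y, pd1 (pd2 ψ) t y]) := by
      funext t; rw [hD t y, Matrix.det_transpose]
    have hmain : pd1 D x y
        = Matrix.det (Matrix.of ![pd1 ψ x y, pd1 ψ x y, pd2 ψ x y, pd1 (pd2 ψ) x y])
          + Matrix.det (Matrix.of ![ψ x y, pd1 (pd1 ψ) x y, pd2 ψ x y, pd1 (pd2 ψ) x y])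
          + Matrix.det (Matrix.of ![ψ x y, pd1 ψ x y, pd1 (pd2 ψ) x y, pd1 (pd2 ψ) x y])
          + Matrix.det (Matrix.of ![ψ x y, pd1 ψ x y, pd2 ψ x y, pd1 (pd1 (pd2 ψ)) x y]) := by
      rw [pd1, hfun]; exact hdet.deriv
    have keyA : pd1 (pd1 (pd2 ψ)) x y
        = (-(Complex.I * ((p x y : ℝ) : ℂ))) • pd2 (pd2 ψ) x y
            + (-(Complex.I * ((pd2 p x y : ℝ) : ℂ))) • pd2 ψ x y
          + ((((V x y : ℂ) + Complex.I * ((pd2 p x y : ℝ) : ℂ)) / 2) • pd2 ψ x y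
            + ((((pd2 V x y : ℝ) : ℂ) + Complex.I * ((pd2 (pd2 p) x y : ℝ) : ℂ)) / 2) • ψ x y) := by
      have e : pd1 (pd2 ψ) = pd2 (pd1 ψ) := funext fun a => funext fun b => pd_symm hψ a b
      rw [e, pd_symm hψ1 x y]
      have hfn : (fun s => pd1 (pd1 ψ) x s)
          = fun s => (-(Complex.I * ((p x s : ℝ) : ℂ))) • pd2 ψ x s
              + (((V x s : ℂ) + Complex.I * ((pd2 p x s : ℝ) : ℂ)) / 2) • ψ x s :=
        funext fun s => hLW1 x s
      have hder := ((((hdd2 hp x y).ofReal_comp.const_mul Complex.I).neg).smul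
          (hdd2 hψ2 x y)).add
        ((((hdd2 hV x y).ofReal_comp.add
            ((hdd2 (contDiff_pd2 hp) x y).ofReal_comp.const_mul Complex.I)).div_const 2).smul
          (hdd2 hψ x y))
      rw [pd2, hfn]
      exact hder.deriv
    rw [hmain, keyA, hLW1 x y, hLW2 x y]
    simp only [det_fin_four, Matrix.of_apply, Matrix.cons_val', Matrix.cons_val_zero,
      Matrix.cons_val_one, Matrix.head_cons, Matrix.cons_val_two, Matrix.tail_cons,
      Matrix.cons_val_three, Matrix.head_fin_const, Matrix.empty_val',
      Matrix.cons_val_fin_one, Pi.add_apply, Pi.smul_apply, smul_eq_mul]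
    ring
  · -- ∂₂ D = 0
    have hdet := hasDerivAt_det4 (hdd2 hψ x y) (hdd2 hψ1 x y) (hdd2 hψ2 x y) (hdd2 hψ12 x y)
    have hfun : (fun s => D x s)
        = fun s => Matrix.det (Matrix.of ![ψ x s, pd1 ψ x s, pd2 ψ x s, pd1 (pd2 ψ) x s]) := by
      funext s; rw [hD x s, Matrix.det_transpose]
    have hmain : pd2 D x y
        = Matrix.det (Matrix.of ![pd2 ψ x y, pd1 ψ x y, pd2 ψ x y, pd1 (pd2 ψ) x y])
          + Matrix.det (Matrix.of ![ψ x y, pd2 (pd1 ψ) x y, pd2 ψ x y, pd1 (pd2 ψ) x y])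
          + Matrix.det (Matrix.of ![ψ x y, pd1 ψ x y, pd2 (pd2 ψ) x y, pd1 (pd2 ψ) x y])
          + Matrix.det (Matrix.of ![ψ x y, pd1 ψ x y, pd2 ψ x y, pd2 (pd1 (pd2 ψ)) x y]) := by
      rw [pd2, hfun]; exact hdet.deriv
    have keyB : pd2 (pd1 (pd2 ψ)) x y
        = (Complex.I * ((q x y : ℝ) : ℂ)) • pd1 (pd1 ψ) x y
            + (Complex.I * ((pd1 q x y : ℝ) : ℂ)) • pd1 ψ x y
          + ((((W x y : ℂ) - Complex.I * ((pd1 q x y : ℝ) : ℂ)) / 2) • pd1 ψ x y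
            + ((((pd1 W x y : ℝ) : ℂ) - Complex.I * ((pd1 (pd1 q) x y : ℝ) : ℂ)) / 2) • ψ x y) := by
      rw [← pd_symm hψ2 x y]
      have hfn : (fun t => pd2 (pd2 ψ) t y)
          = fun t => (Complex.I * ((q t y : ℝ) : ℂ)) • pd1 ψ t y
              + (((W t y : ℂ) - Complex.I * ((pd1 q t y : ℝ) : ℂ)) / 2) • ψ t y :=
        funext fun t => hLW2 t y
      have hder := (((hdd1 hq x y).ofReal_comp.const_mul Complex.I).smul
          (hdd1 hψ1 x y)).add
        ((((hdd1 hW x y).ofReal_comp.sub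
            ((hdd1 (contDiff_pd1 hq) x y).ofReal_comp.const_mul Complex.I)).div_const 2).smul
          (hdd1 hψ x y))
      rw [pd1, hfn]
      exact hder.deriv
    rw [hmain, ← pd_symm hψ x y, keyB, hLW1 x y, hLW2 x y]
    simp only [det_fin_four, Matrix.of_apply, Matrix.cons_val', Matrix.cons_val_zero,
      Matrix.cons_val_one, Matrix.head_cons, Matrix.cons_val_two, Matrix.tail_cons,
      Matrix.cons_val_three, Matrix.head_fin_const, Matrix.empty_val',
      Matrix.cons_val_fin_one, Pi.add_apply, Pi.smul_apply, smul_eq_mul]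
    ring
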